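/- Let Ω = (0,1)×(1,2) ⊂ ℝ² and define z(x,y) = (√x/6)·(4 − y·√(2y)). Then: (i) for every (x,y) ∈ Ω, z(x,y) + x·∂z/∂x(x,y) − y·∂z/∂y(x,y) = √x; (ii) z(x,2) = 0 for every x ∈ (0,1); (iii) ∫∫_Ω z(x,y)² dx dy < ∞; (iv) ∫∫_Ω (∂z/∂x(x,y))² dx dy = +∞. -/

import Mathlib

/-
z = √x · g(y) with g(y) = (4 - y√(2y))/6, and (y√(2y))' = (3/2)√(2y), so the
transport identity is a direct computation. On Ω we have 0 ≤ g ≤ 2/3 and √x ≤ 1, so z is bounded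
and hence square integrable on the bounded set Ω. But ∂z/∂x = g(y)/(2√x), and g ≥ 1/6 for
y ≤ 3/2, so (∂z/∂x)² ≥ 1/(144 x) on (0,1)×(1,3/2), which is not integrable near x = 0.
-/

open MeasureTheory Set Real

/-- The domain Ω = (0,1) × (1,2). -/
def Omega1 : Set (ℝ × ℝ) := Ioo (0:ℝ) 1 ×ˢ Ioo (1:ℝ) 2

/-- The explicit solution z(x,y) = (√x/6)·(4 − y·√(2y)) of Example 2. -/
noncomputable def zEx2 : ℝ × ℝ → ℝ := fun p =>
  Real.sqrt p.1 / 6 * (4 - p.2 * Real.sqrt (2 * p.2))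

/-- Partial derivative ∂z/∂x. -/
noncomputable def zEx2x (p : ℝ × ℝ) : ℝ := deriv (fun t => zEx2 (t, p.2)) p.1

/-- Partial derivative ∂z/∂y. -/
noncomputable def zEx2y (p : ℝ × ℝ) : ℝ := deriv (fun t => zEx2 (p.1, t)) p.2

lemma hasDerivAt_mul_sqrt_two_mul {y : ℝ} (hy : 0 < y) :
    HasDerivAt (fun t => t * √(2 * t)) (3 / 2 * √(2 * y)) y := by
  have h2y : 0 < 2 * y := by positivity
  have hs : √(2 * y) ≠ 0 := (Real.sqrt_pos.2 h2y).ne'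
  refine ((hasDerivAt_id' y).mul (((hasDerivAt_id' y).const_mul 2).sqrt h2y.ne')).congr_deriv ?_
  field_simp
  rw [Real.sq_sqrt h2y.le]
  ring

lemma mul_sqrt_two_mul_le {y : ℝ} (h0 : 0 ≤ y) (h2 : y ≤ 2) : y * √(2 * y) ≤ 2 * y := by
  have : √(2 * y) ≤ 2 := Real.sqrt_le_iff.2 ⟨by norm_num, by linarith⟩
  nlinarith

lemma lintegral_ofReal_inv_Ioo_zero_eq_top {a : ℝ} (ha : 0 < a) :
    ∫⁻ x in Ioo 0 a, ENNReal.ofReal x⁻¹ = ⊤ := by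
  by_contra h
  have hint : IntegrableOn (fun x : ℝ => x⁻¹) (Ioo 0 a) :=
    (lintegral_ofReal_ne_top_iff_integrable measurable_inv.aestronglyMeasurable
      (ae_restrict_of_forall_mem measurableSet_Ioo fun x hx => inv_nonneg.2 hx.1.le)).1 h
  simpa [ha.ne] using (intervalIntegrable_iff_integrableOn_Ioo_of_le ha.le).2 hint

lemma lintegral_ofReal_div_fst_Ioo_prod_eq_top {a b c k : ℝ} (ha : 0 < a) (hbc : b < c)
    (hk : 0 < k) : ∫⁻ p in Ioo 0 a ×ˢ Ioo b c, ENNReal.ofReal (k / p.1) = ⊤ := by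
  simp only [div_eq_mul_inv, ENNReal.ofReal_mul hk.le]
  rw [lintegral_const_mul _ (by fun_prop), Measure.volume_eq_prod, ← Measure.prod_restrict,
    lintegral_prod _ (by fun_prop)]
  simp only [setLIntegral_const, Real.volume_Ioo]
  rw [lintegral_mul_const' _ _ (by simp), lintegral_ofReal_inv_Ioo_zero_eq_top ha,
    ENNReal.top_mul (by simpa using hbc), ENNReal.mul_top (by simpa using hk)]

lemma zEx2x_eq {x y : ℝ} (hx : 0 < x) :
    zEx2x (x, y) = (4 - y * √(2 * y)) / (12 * √x) := by
  have h : HasDerivAt (fun t => zEx2 (t, y)) (1 / (2 * √x) / 6 * (4 - y * √(2 * y))) x :=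
    ((Real.hasDerivAt_sqrt hx.ne').div_const 6).mul_const (4 - y * √(2 * y))
  rw [zEx2x, h.deriv]
  field_simp
  ring

lemma zEx2y_eq {x y : ℝ} (hy : 0 < y) :
    zEx2y (x, y) = -(√x * √(2 * y)) / 4 := by
  have h : HasDerivAt (fun t => zEx2 (x, t)) (√x / 6 * (0 - 3 / 2 * √(2 * y))) y :=
    ((hasDerivAt_const y 4).sub (hasDerivAt_mul_sqrt_two_mul hy)).const_mul (√x / 6)
  rw [zEx2y, h.deriv]
  ring

theorem zEx2_transport {p : ℝ × ℝ} (hp : p ∈ Omega1) :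
    zEx2 p + p.1 * zEx2x p - p.2 * zEx2y p = Real.sqrt p.1 := by
  obtain ⟨x, y⟩ := p
  obtain ⟨⟨hx, -⟩, ⟨hy, -⟩⟩ := hp
  rw [zEx2x_eq hx, zEx2y_eq (by linarith), zEx2]
  dsimp only
  generalize √(2 * y) = u
  have hsx : √x ^ 2 = x := Real.sq_sqrt hx.le
  have : √x ≠ 0 := (Real.sqrt_pos.2 hx).ne'
  field_simp
  linear_combination (24 * (y * u - 4)) * hsx

lemma zEx2_snd_two (x : ℝ) : zEx2 (x, 2) = 0 := by
  norm_num [zEx2, show (2:ℝ) * 2 = 2 ^ 2 by norm_num]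

lemma zEx2_sq_le_one {p : ℝ × ℝ} (hp : p ∈ Omega1) : zEx2 p ^ 2 ≤ 1 := by
  obtain ⟨x, y⟩ := p
  obtain ⟨⟨hx0, hx1⟩, ⟨hy1, hy2⟩⟩ := hp
  have hsx : √x ≤ 1 := Real.sqrt_le_one.2 hx1.le
  have hC : 0 ≤ y * √(2 * y) := by positivity
  have hC' := mul_sqrt_two_mul_le (by linarith) hy2.le
  have hz : zEx2 (x, y) = √x / 6 * (4 - y * √(2 * y)) := rfl
  have hz0 : 0 ≤ zEx2 (x, y) := by rw [hz]; nlinarith [Real.sqrt_nonneg x]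
  have hz1 : zEx2 (x, y) ≤ 1 := by rw [hz]; nlinarith [Real.sqrt_nonneg x]
  nlinarith

lemma one_div_div_le_zEx2x_sq {p : ℝ × ℝ} (hp : p ∈ Ioo (0:ℝ) 1 ×ˢ Ioo (1:ℝ) (3 / 2)) :
    1 / 144 / p.1 ≤ zEx2x p ^ 2 := by
  obtain ⟨x, y⟩ := p
  obtain ⟨⟨hx0, -⟩, ⟨hy1, hy2⟩⟩ := hp
  have hC : 1 ≤ 4 - y * √(2 * y) := by linarith [mul_sqrt_two_mul_le (by linarith) (by linarith)]
  rw [zEx2x_eq hx0, div_pow, mul_pow, Real.sq_sqrt hx0.le, div_div,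
    show (12:ℝ) ^ 2 = 144 by norm_num]
  exact div_le_div_of_nonneg_right (one_le_pow₀ hC) (by positivity)

theorem lintegral_zEx2_sq_lt_top : ∫⁻ p in Omega1, ENNReal.ofReal (zEx2 p ^ 2) < ⊤ := by
  have hΩ : volume Omega1 ≠ ⊤ :=
    ((Metric.isBounded_Ioo _ _).prod (Metric.isBounded_Ioo _ _)).measure_lt_top.ne
  exact setLIntegral_lt_top_of_le_nnreal hΩ
    ⟨1, fun p hp => by simpa using ENNReal.ofReal_le_one.2 (zEx2_sq_le_one hp)⟩

theorem lintegral_zEx2x_sq_eq_top : ∫⁻ p in Omega1, ENNReal.ofReal (zEx2x p ^ 2) = ⊤ := by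
  have hsub : Ioo (0:ℝ) 1 ×ˢ Ioo (1:ℝ) (3 / 2) ⊆ Omega1 :=
    prod_mono subset_rfl (Ioo_subset_Ioo le_rfl (by norm_num))
  refine top_le_iff.1 (le_trans ?_ (lintegral_mono_set hsub))
  rw [← lintegral_ofReal_div_fst_Ioo_prod_eq_top zero_lt_one (by norm_num : (1:ℝ) < 3 / 2)
    (by norm_num : (0:ℝ) < 1 / 144)]
  exact setLIntegral_mono' (measurableSet_Ioo.prod measurableSet_Ioo)
    fun p hp => ENNReal.ofReal_le_ofReal (one_div_div_le_zEx2x_sq hp)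

theorem stmt_1 :
    (∀ p ∈ Omega1, zEx2 p + p.1 * zEx2x p - p.2 * zEx2y p = Real.sqrt p.1) ∧
    (∀ x ∈ Ioo (0:ℝ) 1, zEx2 (x, 2) = 0) ∧
    (∫⁻ p in Omega1, ENNReal.ofReal ((zEx2 p) ^ 2) < ⊤) ∧
    (∫⁻ p in Omega1, ENNReal.ofReal ((zEx2x p) ^ 2) = ⊤) := by
  exact ⟨fun _ hp => zEx2_transport hp, fun x _ => zEx2_snd_two x, lintegral_zEx2_sq_lt_top,
    lintegral_zEx2x_sq_eq_top⟩
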